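/- For every integer m ≥ 2, every real number a, and every function X : B_{m-1} → ℝ, the average over all T in B_m of X(trunc(T))·a^{U_m(T)} equals (a/m) times the average over all T' in B_{m-1} of X(T')·(a+1)^{U_{m-1}(T')}; that is, (1/|B_m|)·Σ_{T ∈ B_m} X(trunc(T))·a^{U_m(T)} = (a/m)·(1/|B_{m-1}|)·Σ_{T' ∈ B_{m-1}} X(T')·(a+1)^{U_{m-1}(T')}. -/

import Mathlib

/-- A type-B permutation tableau of size `n`, encoded via its border steps and filling.

Border steps are indexed by `Fin n` (index `i` is the `(i+1)`-th step from the
northeast corner); `west i = true` means the `(i+1)`-th step is a west step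
(giving a column) and `west i = false` means it is a south step (giving a row
of the original, unshifted diagram).

Rows of the shifted diagram are also indexed by `Fin n`: a south step `r` indexes
the corresponding original row, and a west step `r` indexes the inserted diagonal
row whose diagonal cell lies in the column of `r`.  The cell in row `r` and the
column of a west step `c` exists iff (`r` is south and `r < c`) or (`r` is west
and `r ≤ c`); in particular the diagonal cell of the column of `c` is `(c, c)`.
Columns are ordered left-to-right by decreasing step index, rows top-to-bottom as:
diagonal rows by decreasing step index, then original rows by increasing step index.

`filling r c = true` means the cell `(r, c)` contains a 1; `filling` is `false`
outside the cells of the diagram (field `support`).  The fields `col_one`,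
`no_bad_zero` and `diag_zero` are the three defining conditions of a type-B
permutation tableau. -/
structure TypeBTableau (n : ℕ) where
  west : Fin n → Bool
  filling : Fin n → Fin n → Bool
  support : ∀ r c : Fin n, filling r c = true →
    west c = true ∧ ((west r = false ∧ (r : ℕ) < (c : ℕ)) ∨ (west r = true ∧ (r : ℕ) ≤ (c : ℕ)))
  col_one : ∀ c : Fin n, west c = true → ∃ r : Fin n, filling r c = true
  no_bad_zero : ∀ r c : Fin n,
    (west c = true ∧ ((west r = false ∧ (r : ℕ) < (c : ℕ)) ∨ (west r = true ∧ (r : ℕ) ≤ (c : ℕ)))) →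
    filling r c = false →
    ¬((∃ r' : Fin n,
        ((west r' = true ∧ west r = false) ∨
         (west r' = true ∧ west r = true ∧ (r : ℕ) < (r' : ℕ)) ∨
         (west r' = false ∧ west r = false ∧ (r' : ℕ) < (r : ℕ))) ∧
        filling r' c = true) ∧
      (∃ c' : Fin n, (c : ℕ) < (c' : ℕ) ∧ filling r c' = true))
  diag_zero : ∀ j : Fin n, west j = true → filling j j = false →
    ∀ c : Fin n, filling j c = false

namespace TypeBTableau

noncomputable instance instFintype {n : ℕ} : Fintype (TypeBTableau n) :=
  Fintype.ofInjective (fun T => (T.west, T.filling)) (by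
    rintro ⟨w1, f1, _, _, _, _⟩ ⟨w2, f2, _, _, _, _⟩ h
    simp only [Prod.mk.injEq] at h
    obtain ⟨h1, h2⟩ := h
    subst h1; subst h2; rfl)

end TypeBTableau

namespace TypeBTableau

/-- `T.IsCell r c` : the shifted Ferrers diagram of `T` has a cell in row `r` and
in the column of the west step `c`. -/
def IsCell {n : ℕ} (T : TypeBTableau n) (r c : Fin n) : Prop :=
  T.west c = true ∧
    ((T.west r = false ∧ (r : ℕ) < (c : ℕ)) ∨ (T.west r = true ∧ (r : ℕ) ≤ (c : ℕ)))

/-- `T.Above r' r` : row `r'` lies strictly above row `r` in the shifted diagram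
(diagonal rows come first, ordered by decreasing step index, followed by the
original rows ordered by increasing step index). -/
def Above {n : ℕ} (T : TypeBTableau n) (r' r : Fin n) : Prop :=
  (T.west r' = true ∧ T.west r = false) ∨
  (T.west r' = true ∧ T.west r = true ∧ (r : ℕ) < (r' : ℕ)) ∨
  (T.west r' = false ∧ T.west r = false ∧ (r' : ℕ) < (r : ℕ))

/-- The cell `(r, c)` is a restricted 0: it contains a 0 and either has a 1 above
it in its column, or is a diagonal cell. -/
def RestrictedZero {n : ℕ} (T : TypeBTableau n) (r c : Fin n) : Prop :=
  T.IsCell r c ∧ T.filling r c = false ∧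
    ((∃ r' : Fin n, T.Above r' r ∧ T.IsCell r' c ∧ T.filling r' c = true) ∨
      (T.west r = true ∧ r = c))

/-- Row `r` of the shifted diagram is unrestricted: it contains no restricted 0. -/
def Unrestricted {n : ℕ} (T : TypeBTableau n) (r : Fin n) : Prop :=
  ∀ c : Fin n, ¬ T.RestrictedZero r c

instance {n : ℕ} (T : TypeBTableau n) (r c : Fin n) : Decidable (T.RestrictedZero r c) := by
  unfold RestrictedZero IsCell Above; infer_instance

instance {n : ℕ} (T : TypeBTableau n) (r : Fin n) : Decidable (T.Unrestricted r) := by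
  unfold Unrestricted; infer_instance

/-- `U_n(T)`, the number of unrestricted rows of `T`. -/
def numUnrestricted {n : ℕ} (T : TypeBTableau n) : ℕ :=
  (Finset.univ.filter (fun r : Fin n => T.Unrestricted r)).card

end TypeBTableau

namespace TypeBTableau

/-- Truncation `B_{n+1} → B_n`: delete the last border step.  If the last step is
south the corresponding (bottom, empty) row is deleted; if it is west, the
corresponding (leftmost) column is deleted together with its inserted diagonal
row.  In the encoding this is just restriction of `west` and `filling` along
`Fin.castSucc`. -/
def trunc {n : ℕ} (T : TypeBTableau (n + 1)) : TypeBTableau n where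
  west i := T.west i.castSucc
  filling r c := T.filling r.castSucc c.castSucc
  support r c h := by
    have h' := T.support r.castSucc c.castSucc h
    simpa using h'
  col_one c hc := by
    obtain ⟨r, hr⟩ := T.col_one c.castSucc hc
    have hcell := T.support r c.castSucc hr
    have hrlt : (r : ℕ) < n := by
      have hc' : ((c.castSucc : Fin (n + 1)) : ℕ) < n := by simp
      rcases hcell.2 with ⟨_, h2⟩ | ⟨_, h2⟩ <;> omega
    refine ⟨⟨(r : ℕ), hrlt⟩, ?_⟩
    have hcast : (Fin.castSucc (⟨(r : ℕ), hrlt⟩ : Fin n)) = r := by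
      ext; simp
    simpa [hcast] using hr
  no_bad_zero r c hcell h0 := by
    rintro ⟨⟨r', hab, hr'1⟩, ⟨c', hlt, hc'1⟩⟩
    refine T.no_bad_zero r.castSucc c.castSucc ?_ h0
      ⟨⟨r'.castSucc, ?_, hr'1⟩, ⟨c'.castSucc, ?_, hc'1⟩⟩
    · simpa using hcell
    · simpa using hab
    · simpa using hlt
  diag_zero j hj h0 c := T.diag_zero j.castSucc hj h0 c.castSucc

end TypeBTableau

open Finset

/-!
A tableau of size `n + 1` is determined by its truncation `T'`, its last step and the filling of
the column of that step. Fix `T'` with `k` unrestricted rows. There is one extension by a south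
step, and it has `k + 1` unrestricted rows. A new west column may carry 1s only in the new
diagonal cell and in a set `B` of unrestricted rows of `T'` (otherwise a restricted 0 of `T'` gets
a 1 to its left). If the diagonal cell is 1 the unrestricted rows are `B` and the diagonal row,
giving `∑ a ^ (#B + 1) = a (1 + a) ^ k`; if it is 0 they are `B` together with the unrestricted
rows above the topmost 1, and summing over `B ≠ ∅` by induction on the lowest row gives
`a (1 + a) ^ k - a ^ (k + 1)`. Hence the fibre of `trunc` over `T'` contributes
`2 a (a + 1) ^ k`, so `∑ X (trunc T) a ^ U(T) = 2 a ∑ X T' (a + 1) ^ U(T')`. Taking `X = 1`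
and iterating gives `|B_m| = 2 ^ m m!`, and the averages differ by the factor `2 a / (2 m)`.
-/

section CountMemOrAbove

variable {ι α : Type*} [DecidableEq ι] [LinearOrder α]

/-- `κ` is read as depth: `i` lies weakly above `j` when `κ i ≤ κ j`. -/
def countMemOrAbove (κ : ι → α) (u A : Finset ι) : ℕ :=
  #{i ∈ u | i ∈ A ∨ ∀ j ∈ A, κ i ≤ κ j}

variable {κ : ι → α} {u A : Finset ι} {b : ι}

@[simp]
lemma countMemOrAbove_empty (κ : ι → α) (u : Finset ι) : countMemOrAbove κ u ∅ = #u := by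
  simp [countMemOrAbove]

lemma countMemOrAbove_insert_insert (hb : ∀ i ∈ u, κ i < κ b) (hbu : b ∉ u) :
    countMemOrAbove κ (insert b u) (insert b A) = countMemOrAbove κ u A + 1 := by
  rw [countMemOrAbove, filter_insert, if_pos (Or.inl (mem_insert_self b A)),
    card_insert_of_notMem (fun h => hbu (mem_of_mem_filter b h))]
  congr 2
  refine filter_congr fun i hi => ?_
  have hib : i ≠ b := by rintro rfl; exact hbu hi
  simp only [mem_insert, forall_eq_or_imp, (hb i hi).le, true_and, hib, false_or]

lemma countMemOrAbove_insert_of_nonempty (hb : ∀ i ∈ u, κ i < κ b) (hbu : b ∉ u) (hA : A ⊆ u)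
    (hA₀ : A.Nonempty) : countMemOrAbove κ (insert b u) A = countMemOrAbove κ u A := by
  obtain ⟨j, hj⟩ := hA₀
  rw [countMemOrAbove, filter_insert, if_neg]
  · rfl
  · rintro (h | h)
    · exact hbu (hA h)
    · exact (h j hj).not_gt (hb j (hA hj))

theorem sum_pow_countMemOrAbove {R : Type*} [CommRing R] (hκ : Set.InjOn κ u) (a : R) :
    ∑ A ∈ u.powerset, a ^ countMemOrAbove κ u A = a * (1 + a) ^ #u + (1 - a) * a ^ #u := by
  induction u using Finset.induction_on_max_value κ with
  | empty => simp
  | insert b u hbu hmax ih =>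
    have hlt : ∀ i ∈ u, κ i < κ b := fun i hi => (hmax i hi).lt_of_ne fun h =>
      hbu (hκ (mem_insert_of_mem hi) (mem_insert_self b u) h ▸ hi)
    have hsplit : ∀ A ∈ u.powerset, a ^ countMemOrAbove κ (insert b u) A =
        a ^ countMemOrAbove κ u A + if A = ∅ then (a - 1) * a ^ #u else 0 := by
      intro A hA
      rcases A.eq_empty_or_nonempty with rfl | hA₀
      · simp only [countMemOrAbove_empty, card_insert_of_notMem hbu, ↓reduceIte]; ring
      · rw [countMemOrAbove_insert_of_nonempty hlt hbu (mem_powerset.mp hA) hA₀,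
          if_neg hA₀.ne_empty, add_zero]
    rw [sum_powerset_insert hbu, sum_congr rfl hsplit, sum_add_distrib, sum_ite_eq',
      if_pos (empty_mem_powerset u), ih (hκ.mono (subset_insert b u)), card_insert_of_notMem hbu]
    simp only [countMemOrAbove_insert_insert hlt hbu, pow_succ, ← sum_mul]
    rw [ih (hκ.mono (subset_insert b u))]
    ring

end CountMemOrAbove

namespace TypeBTableau

variable {n : ℕ} {R : Type*} [CommRing R]

@[ext]
theorem ext {T₁ T₂ : TypeBTableau n} (hw : T₁.west = T₂.west) (hf : T₁.filling = T₂.filling) :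
    T₁ = T₂ := by
  cases T₁; cases T₂; simp_all

instance : DecidableEq (TypeBTableau n) := fun T₁ T₂ =>
  decidable_of_iff (T₁.west = T₂.west ∧ T₁.filling = T₂.filling)
    ⟨fun h => ext h.1 h.2, by rintro rfl; exact ⟨rfl, rfl⟩⟩

instance : Unique (TypeBTableau 0) where
  default :=
    { west := Fin.elim0
      filling := fun r => r.elim0
      support := fun r => r.elim0
      col_one := fun c => c.elim0
      no_bad_zero := fun r => r.elim0
      diag_zero := fun j => j.elim0 }
  uniq _ := ext (funext fun i => i.elim0) (funext fun r => r.elim0)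

def unrestrictedRows (T : TypeBTableau n) : Finset (Fin n) := {r | T.Unrestricted r}

@[simp]
lemma mem_unrestrictedRows {T : TypeBTableau n} {r : Fin n} :
    r ∈ T.unrestrictedRows ↔ T.Unrestricted r := by
  simp [unrestrictedRows]

lemma card_unrestrictedRows (T : TypeBTableau n) : #T.unrestrictedRows = T.numUnrestricted :=
  rfl

/-- Position of a row from the top of the shifted diagram. -/
def rank (T : TypeBTableau n) (r : Fin n) : ℕ :=
  if T.west r then n - 1 - r else n + r

lemma above_iff_rank_lt (T : TypeBTableau n) (r' r : Fin n) :
    T.Above r' r ↔ T.rank r' < T.rank r := by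
  have := r.isLt
  have := r'.isLt
  unfold Above rank
  cases T.west r <;> cases T.west r' <;> simp <;> omega

lemma rank_injective (T : TypeBTableau n) : Function.Injective T.rank := by
  intro r r' h
  have := r.isLt
  have := r'.isLt
  unfold rank at h
  ext
  cases hr : T.west r <;> cases hr' : T.west r' <;> simp [hr, hr'] at h <;> omega

lemma isCell_last_iff (T : TypeBTableau (n + 1)) (r : Fin (n + 1)) :
    T.IsCell r (Fin.last n) ↔ T.west (Fin.last n) = true := by
  refine ⟨And.left, fun h => ⟨h, ?_⟩⟩
  induction r using Fin.lastCases with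
  | last => exact Or.inr ⟨h, le_rfl⟩
  | cast r => cases T.west r.castSucc <;> simp [r.isLt, r.isLt.le]

lemma eq_last_of_isCell_last {T : TypeBTableau (n + 1)} {c : Fin (n + 1)}
    (h : T.IsCell (Fin.last n) c) : c = Fin.last n := by
  rw [Fin.ext_iff, Fin.val_last]
  have := c.isLt
  rcases h.2 with ⟨_, h⟩ | ⟨_, h⟩ <;> rw [Fin.val_last] at h <;> omega

@[simp]
lemma filling_last_castSucc (T : TypeBTableau (n + 1)) (c : Fin n) :
    T.filling (Fin.last n) c.castSucc = false := by
  by_contra h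
  exact Fin.castSucc_ne_last c (eq_last_of_isCell_last (T.support _ _ (Bool.not_eq_false _ ▸ h)))

lemma filling_last_of_west_last_eq_false {T : TypeBTableau (n + 1)}
    (h : T.west (Fin.last n) = false) (r : Fin (n + 1)) : T.filling r (Fin.last n) = false := by
  by_contra hr
  have := (T.support _ _ (Bool.not_eq_false _ ▸ hr)).1
  simp [h] at this

lemma above_last_castSucc {T : TypeBTableau (n + 1)} (h : T.west (Fin.last n) = true)
    (r : Fin n) : T.Above (Fin.last n) r.castSucc := by
  unfold Above
  cases T.west r.castSucc <;> simp [h, r.isLt]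

lemma restrictedZero_castSucc_iff (T : TypeBTableau (n + 1)) (r c : Fin n) :
    T.RestrictedZero r.castSucc c.castSucc ↔ T.trunc.RestrictedZero r c := by
  refine and_congr_right' (and_congr_right' (or_congr ⟨?_, ?_⟩ (and_congr_right'
    (Fin.castSucc_injective n).eq_iff)))
  · rintro ⟨r', hr'⟩
    induction r' using Fin.lastCases with
    | last => simp at hr'
    | cast r' => exact ⟨r', hr'⟩
  · rintro ⟨r', hr'⟩
    exact ⟨r'.castSucc, hr'⟩

lemma unrestricted_castSucc_iff (T : TypeBTableau (n + 1)) (r : Fin n) :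
    T.Unrestricted r.castSucc ↔
      T.trunc.Unrestricted r ∧ ¬ T.RestrictedZero r.castSucc (Fin.last n) := by
  simp only [Unrestricted, Fin.forall_fin_succ', restrictedZero_castSucc_iff]

lemma unrestricted_castSucc_iff_of_south {T : TypeBTableau (n + 1)}
    (h : T.west (Fin.last n) = false) (r : Fin n) :
    T.Unrestricted r.castSucc ↔ T.trunc.Unrestricted r := by
  rw [unrestricted_castSucc_iff, and_iff_left]
  rintro ⟨hcell, -⟩
  simp [(isCell_last_iff T _).mp hcell] at h

lemma unrestricted_castSucc_iff_of_west {T : TypeBTableau (n + 1)}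
    (h : T.west (Fin.last n) = true) (r : Fin n) :
    T.Unrestricted r.castSucc ↔ T.trunc.Unrestricted r ∧
      (T.filling r.castSucc (Fin.last n) = true ∨
        ∀ r', T.Above r' r.castSucc → T.filling r' (Fin.last n) = false) := by
  have hdiag : ¬ (T.west r.castSucc = true ∧ r.castSucc = Fin.last n) :=
    fun h => Fin.castSucc_ne_last r h.2
  have hcell : ∀ r', T.IsCell r' (Fin.last n) := fun r' => (isCell_last_iff T r').mpr h
  simp only [unrestricted_castSucc_iff, RestrictedZero, hcell, hdiag, or_false, true_and,
    not_and_or, Bool.not_eq_false, not_exists, Bool.not_eq_true]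
  simp only [imp_iff_not_or]

lemma unrestricted_last_of_south {T : TypeBTableau (n + 1)} (h : T.west (Fin.last n) = false) :
    T.Unrestricted (Fin.last n) := by
  rintro c ⟨hcell, -⟩
  obtain rfl := eq_last_of_isCell_last hcell
  simp [(isCell_last_iff T _).mp hcell] at h

lemma unrestricted_last_iff_of_west {T : TypeBTableau (n + 1)} (h : T.west (Fin.last n) = true) :
    T.Unrestricted (Fin.last n) ↔ T.filling (Fin.last n) (Fin.last n) = true := by
  refine ⟨fun hu => ?_, fun hd c ⟨hcell, h0, _⟩ => ?_⟩
  · by_contra hd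
    exact hu _ ⟨(isCell_last_iff T _).mpr h, Bool.not_eq_true _ ▸ hd, Or.inr ⟨h, rfl⟩⟩
  · obtain rfl := eq_last_of_isCell_last hcell
    simp [hd] at h0

def lastColumnOnes (T : TypeBTableau (n + 1)) : Finset (Fin n) :=
  {r | T.filling r.castSucc (Fin.last n) = true}

@[simp]
lemma mem_lastColumnOnes {T : TypeBTableau (n + 1)} {r : Fin n} :
    r ∈ T.lastColumnOnes ↔ T.filling r.castSucc (Fin.last n) = true := by
  simp [lastColumnOnes]

/-- A restricted 0 in a row with a 1 in the last column would either be a 0 with a 1 above it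
and a 1 to its left, or a diagonal 0 in a row that is not all 0. -/
lemma lastColumnOnes_subset_unrestrictedRows (T : TypeBTableau (n + 1)) :
    T.lastColumnOnes ⊆ T.trunc.unrestrictedRows := by
  intro r hr
  rw [mem_lastColumnOnes] at hr
  rw [mem_unrestrictedRows]
  intro c hc
  obtain ⟨hcell, h0, ⟨r', habove, -, hr'⟩ | ⟨hw, hrc⟩⟩ := (restrictedZero_castSucc_iff T r c).mpr hc
  · exact T.no_bad_zero _ _ hcell h0 ⟨⟨r', habove, hr'⟩, ⟨Fin.last n, by simp, hr⟩⟩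
  · rw [← hrc] at h0
    simp [T.diag_zero _ hw h0 (Fin.last n)] at hr

lemma numUnrestricted_eq_card_add (T : TypeBTableau (n + 1)) :
    T.numUnrestricted =
      #{r : Fin n | T.Unrestricted r.castSucc} + if T.Unrestricted (Fin.last n) then 1 else 0 := by
  simp only [numUnrestricted, card_filter, Fin.sum_univ_castSucc]

lemma numUnrestricted_of_south {T : TypeBTableau (n + 1)} (h : T.west (Fin.last n) = false) :
    T.numUnrestricted = T.trunc.numUnrestricted + 1 := by
  rw [numUnrestricted_eq_card_add, if_pos (unrestricted_last_of_south h)]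
  simp only [unrestricted_castSucc_iff_of_south h]
  rfl

lemma numUnrestricted_of_diag_one {T : TypeBTableau (n + 1)}
    (hd : T.filling (Fin.last n) (Fin.last n) = true) :
    T.numUnrestricted = #T.lastColumnOnes + 1 := by
  have hw := (T.support _ _ hd).1
  rw [numUnrestricted_eq_card_add, if_pos ((unrestricted_last_iff_of_west hw).mpr hd)]
  congr 2
  ext r
  have hsub := @lastColumnOnes_subset_unrestrictedRows _ T r
  simp only [mem_filter, mem_univ, true_and, unrestricted_castSucc_iff_of_west hw,
    mem_lastColumnOnes, mem_unrestrictedRows] at hsub ⊢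
  refine ⟨?_, fun h => ⟨hsub h, Or.inl h⟩⟩
  rintro ⟨_, h | h⟩
  · exact h
  · simp [h _ (above_last_castSucc hw r)] at hd

lemma numUnrestricted_of_diag_zero {T : TypeBTableau (n + 1)} (hw : T.west (Fin.last n) = true)
    (hd : T.filling (Fin.last n) (Fin.last n) = false) :
    T.numUnrestricted =
      countMemOrAbove T.trunc.rank T.trunc.unrestrictedRows T.lastColumnOnes := by
  have habove : ∀ r, (∀ r', T.Above r' r.castSucc → T.filling r' (Fin.last n) = false) ↔
      ∀ j ∈ T.lastColumnOnes, T.trunc.rank r ≤ T.trunc.rank j := by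
    intro r
    simp only [Fin.forall_fin_succ', hd, implies_true, and_true, mem_lastColumnOnes]
    refine forall_congr' fun j => ?_
    rw [← not_lt, ← above_iff_rank_lt]
    change (T.trunc.Above j r → _) ↔ _
    cases T.filling j.castSucc (Fin.last n) <;> simp
  rw [numUnrestricted_eq_card_add, if_neg (by rw [unrestricted_last_iff_of_west hw, hd]; simp),
    add_zero, countMemOrAbove, unrestrictedRows, filter_filter]
  simp only [unrestricted_castSucc_iff_of_west hw, habove, mem_lastColumnOnes]

lemma eq_of_trunc_eq {T₁ T₂ : TypeBTableau (n + 1)} (h : T₁.trunc = T₂.trunc)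
    (hw : T₁.west (Fin.last n) = T₂.west (Fin.last n))
    (hc : ∀ r, T₁.filling r (Fin.last n) = T₂.filling r (Fin.last n)) : T₁ = T₂ := by
  ext1
  · funext i
    induction i using Fin.lastCases with
    | last => exact hw
    | cast i => exact congrArg (·.west i) h
  · funext r c
    induction c using Fin.lastCases with
    | last => exact hc r
    | cast c =>
      induction r using Fin.lastCases with
      | last => simp
      | cast r => exact congrArg (·.filling r c) h

/-- `hx` is what rules out a 0 of `T` with a 1 above it and a new 1 to its left. -/
def extend (T : TypeBTableau n) (w : Bool) (x : Fin (n + 1) → Bool)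
    (hxw : ∀ r, x r = true → w = true) (hwx : w = true → ∃ r, x r = true)
    (hx : ∀ r : Fin n, x r.castSucc = true → T.Unrestricted r) : TypeBTableau (n + 1) where
  west := Fin.lastCases w T.west
  filling r c := Fin.lastCases (x r) (fun c => Fin.lastCases false (fun r => T.filling r c) r) c
  support r c h := by
    induction c using Fin.lastCases with
    | last =>
      simp only [Fin.lastCases_last] at h
      have hw := hxw r h
      refine ⟨by simpa using hw, ?_⟩
      induction r using Fin.lastCases with
      | last => simp [hw]
      | cast r => cases T.west r <;> simp [r.isLt, r.isLt.le]
    | cast c =>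
      induction r using Fin.lastCases with
      | last => simp at h
      | cast r => simpa using T.support r c (by simpa using h)
  col_one c hc := by
    induction c using Fin.lastCases with
    | last => simpa using hwx (by simpa using hc)
    | cast c =>
      obtain ⟨r, hr⟩ := T.col_one c (by simpa using hc)
      exact ⟨r.castSucc, by simpa using hr⟩
  no_bad_zero r c hcell h0 := by
    rintro ⟨⟨r', habove, hr'⟩, ⟨c', hcc', hc'⟩⟩
    induction c using Fin.lastCases with
    | last => have := c'.isLt; simp only [Fin.val_last] at hcc'; omega
    | cast c =>
    induction r using Fin.lastCases with
    | last =>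
      have := c.isLt
      rcases hcell.2 with ⟨_, h⟩ | ⟨_, h⟩ <;>
        simp only [Fin.val_last, Fin.val_castSucc] at h <;> omega
    | cast r =>
    induction r' using Fin.lastCases with
    | last => simp at hr'
    | cast r' =>
    have hcell' : T.IsCell r c := by unfold IsCell; simpa using hcell
    have habove' : T.Above r' r := by unfold Above; simpa using habove
    simp only [Fin.lastCases_castSucc] at h0 hr'
    induction c' using Fin.lastCases with
    | last =>
      exact hx r (by simpa using hc') c ⟨hcell', h0, Or.inl ⟨r', habove', T.support r' c hr', hr'⟩⟩
    | cast c' =>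
      exact T.no_bad_zero r c hcell' h0
        ⟨⟨r', habove', hr'⟩, ⟨c', by simpa using hcc', by simpa using hc'⟩⟩
  diag_zero j hj h0 c := by
    induction j using Fin.lastCases with
    | last =>
      induction c using Fin.lastCases with
      | last => simpa using h0
      | cast c => simp
    | cast j =>
      simp only [Fin.lastCases_castSucc] at hj h0
      induction c using Fin.lastCases with
      | last =>
        simp only [Fin.lastCases_last]
        by_contra hxj
        exact hx j (Bool.not_eq_false _ ▸ hxj) j
          ⟨⟨hj, Or.inr ⟨hj, le_rfl⟩⟩, h0, Or.inr ⟨hj, rfl⟩⟩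
      | cast c => simpa using T.diag_zero j hj h0 c

section extend

variable (T : TypeBTableau n) (w : Bool) (x : Fin (n + 1) → Bool) (hxw hwx hx)

@[simp]
lemma trunc_extend : (T.extend w x hxw hwx hx).trunc = T := by
  ext <;> simp [extend, trunc]

@[simp]
lemma extend_west_last : (T.extend w x hxw hwx hx).west (Fin.last n) = w := by
  simp [extend]

@[simp]
lemma extend_filling_last (r : Fin (n + 1)) :
    (T.extend w x hxw hwx hx).filling r (Fin.last n) = x r := by
  simp [extend]

end extend

lemma filter_south_eq_singleton_extend (T' : TypeBTableau n) :
    ({T : TypeBTableau (n + 1) | T.trunc = T' ∧ T.west (Fin.last n) = false} : Finset _) =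
      {T'.extend false (fun _ => false) (by simp) (by simp) (by simp)} := by
  ext T
  simp only [mem_filter, mem_univ, true_and, mem_singleton]
  refine ⟨fun ⟨hT, hw⟩ => eq_of_trunc_eq (by simpa using hT) (by simpa using hw) fun r => ?_,
    by rintro rfl; simp⟩
  simpa using filling_last_of_west_last_eq_false hw r

lemma sum_lastColumnOnes_eq_sum_powerset {M : Type*} [AddCommMonoid M] (T' : TypeBTableau n)
    (d : Bool) (f : Finset (Fin n) → M) :
    ∑ T ∈ {T : TypeBTableau (n + 1) | T.trunc = T' ∧ T.west (Fin.last n) = true ∧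
        T.filling (Fin.last n) (Fin.last n) = d}, f T.lastColumnOnes =
      ∑ B ∈ T'.unrestrictedRows.powerset with d = true ∨ B ≠ ∅, f B := by
  refine sum_nbij lastColumnOnes ?_ ?_ ?_ fun _ _ => rfl
  · simp only [mem_filter, mem_univ, true_and, mem_powerset, and_imp]
    rintro T rfl hw rfl
    refine ⟨T.lastColumnOnes_subset_unrestrictedRows, ?_⟩
    obtain ⟨r, hr⟩ := T.col_one _ hw
    induction r using Fin.lastCases with
    | last => exact Or.inl hr
    | cast r => exact Or.inr (ne_empty_of_mem (mem_lastColumnOnes.mpr hr))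
  · simp only [Set.InjOn, coe_filter, mem_univ, true_and, Set.mem_ofPred_eq, and_imp]
    rintro T₁ rfl hw₁ rfl T₂ hT₂ hw₂ hd₂ hB
    refine eq_of_trunc_eq hT₂.symm (hw₁.trans hw₂.symm) fun r => ?_
    induction r using Fin.lastCases with
    | last => exact hd₂.symm
    | cast r => simpa using congrArg (r ∈ ·) hB
  · intro B hB
    obtain ⟨hB, hne⟩ := mem_filter.mp hB
    have hone : ∃ r, Fin.lastCases d (fun r => decide (r ∈ B)) r = true := by
      rcases hne with rfl | hne
      · exact ⟨Fin.last n, by simp⟩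
      · obtain ⟨r, hr⟩ := nonempty_iff_ne_empty.mpr hne
        exact ⟨r.castSucc, by simpa using hr⟩
    have hunr (r : Fin n) (hr : Fin.lastCases d (fun r => decide (r ∈ B)) r.castSucc = true) :
        T'.Unrestricted r := by
      simpa using mem_powerset.mp hB (by simpa using hr)
    refine ⟨T'.extend true _ (by simp) (fun _ => hone) hunr, by simp, ?_⟩
    ext r
    simp

lemma sum_south_pow_numUnrestricted (T' : TypeBTableau n) (a : R) :
    ∑ T : TypeBTableau (n + 1) with T.trunc = T' ∧ T.west (Fin.last n) = false,
      a ^ T.numUnrestricted = a ^ (T'.numUnrestricted + 1) := by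
  rw [filter_south_eq_singleton_extend, sum_singleton, numUnrestricted_of_south (by simp),
    trunc_extend]

lemma sum_diag_one_pow_numUnrestricted (T' : TypeBTableau n) (a : R) :
    ∑ T : TypeBTableau (n + 1) with T.trunc = T' ∧ T.west (Fin.last n) = true ∧
      T.filling (Fin.last n) (Fin.last n) = true, a ^ T.numUnrestricted =
        a * (1 + a) ^ T'.numUnrestricted := by
  rw [sum_congr rfl fun T hT => by rw [numUnrestricted_of_diag_one (mem_filter.mp hT).2.2.2],
    sum_lastColumnOnes_eq_sum_powerset T' true fun B => a ^ (#B + 1)]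
  simp only [true_or, filter_true, pow_succ, ← sum_mul]
  have := sum_pow_mul_eq_add_pow a 1 T'.unrestrictedRows
  simp only [one_pow, mul_one] at this
  rw [this, card_unrestrictedRows, mul_comm, add_comm]

lemma sum_diag_zero_pow_numUnrestricted (T' : TypeBTableau n) (a : R) :
    ∑ T : TypeBTableau (n + 1) with T.trunc = T' ∧ T.west (Fin.last n) = true ∧
      T.filling (Fin.last n) (Fin.last n) = false, a ^ T.numUnrestricted =
        a * (1 + a) ^ T'.numUnrestricted - a ^ (T'.numUnrestricted + 1) := by
  rw [sum_congr rfl fun T hT => by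
      obtain ⟨-, hT, hw, hd⟩ := mem_filter.mp hT
      rw [numUnrestricted_of_diag_zero hw hd, hT],
    sum_lastColumnOnes_eq_sum_powerset T' false (a ^ countMemOrAbove T'.rank T'.unrestrictedRows ·)]
  simp only [Bool.false_eq_true, false_or, filter_ne']
  rw [sum_erase_eq_sub (empty_mem_powerset _), sum_pow_countMemOrAbove (rank_injective T').injOn,
    countMemOrAbove_empty]
  rw [card_unrestrictedRows]
  ring

theorem sum_pow_numUnrestricted_fiber (T' : TypeBTableau n) (a : R) :
    ∑ T : TypeBTableau (n + 1) with T.trunc = T', a ^ T.numUnrestricted =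
      2 * a * (a + 1) ^ T'.numUnrestricted := by
  rw [← sum_filter_add_sum_filter_not _ fun T => T.west (Fin.last n) = true,
    ← sum_filter_add_sum_filter_not (filter _ _)
      fun T => T.filling (Fin.last n) (Fin.last n) = true]
  simp only [filter_filter, Bool.not_eq_true, and_assoc]
  rw [sum_diag_one_pow_numUnrestricted, sum_diag_zero_pow_numUnrestricted,
    sum_south_pow_numUnrestricted]
  ring

theorem sum_mul_pow_numUnrestricted_trunc (X : TypeBTableau n → R) (a : R) :
    ∑ T : TypeBTableau (n + 1), X T.trunc * a ^ T.numUnrestricted =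
      2 * a * ∑ T', X T' * (a + 1) ^ T'.numUnrestricted := by
  rw [← sum_fiberwise univ trunc, mul_sum]
  refine sum_congr rfl fun T' _ => ?_
  rw [sum_congr rfl fun T hT => by rw [(mem_filter.mp hT).2], ← mul_sum,
    sum_pow_numUnrestricted_fiber]
  ring

theorem sum_pow_numUnrestricted (m : ℕ) (a : R) :
    ∑ T : TypeBTableau m, a ^ T.numUnrestricted = 2 ^ m * ∏ i ∈ range m, (a + i) := by
  induction m generalizing a with
  | zero => simp [numUnrestricted]
  | succ m ih =>
    have := sum_mul_pow_numUnrestricted_trunc (n := m) (fun _ => (1 : R)) a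
    simp only [one_mul] at this
    rw [this, ih, prod_range_succ']
    simp only [Nat.cast_add, Nat.cast_one, Nat.cast_zero, add_zero]
    ring_nf

theorem card_eq (m : ℕ) : Fintype.card (TypeBTableau m) = 2 ^ m * m.factorial := by
  have := sum_pow_numUnrestricted m (1 : ℤ)
  simp only [one_pow, sum_const, card_univ, nsmul_eq_mul, mul_one] at this
  rw [← prod_range_add_one_eq_factorial, ← Nat.cast_inj (R := ℤ), this]
  push_cast
  simp only [add_comm]

end TypeBTableau

theorem average_trunc_pow_unrestricted_general (n : ℕ) (a : ℝ)
    (X : TypeBTableau n → ℝ) :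
    (1 / (Fintype.card (TypeBTableau (n + 1)) : ℝ)) *
        ∑ T : TypeBTableau (n + 1), X T.trunc * a ^ T.numUnrestricted =
      (a / ((n : ℝ) + 1)) *
        ((1 / (Fintype.card (TypeBTableau n) : ℝ)) *
          ∑ T' : TypeBTableau n, X T' * (a + 1) ^ T'.numUnrestricted) := by
  rw [TypeBTableau.sum_mul_pow_numUnrestricted_trunc, TypeBTableau.card_eq,
    TypeBTableau.card_eq, Nat.factorial_succ]
  push_cast
  field_simp
  ring

/-- The basic recursion between the uniform measures on `B_m` and `B_{m-1}`
(here `m = n + 1 ≥ 2`): for any real `a` and any `X : B_{m-1} → ℝ`, the average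
over `T ∈ B_m` of `X(trunc T) · a ^ U_m(T)` equals `(a/m)` times the average over
`T' ∈ B_{m-1}` of `X(T') · (a+1) ^ U_{m-1}(T')`. -/
theorem average_trunc_pow_unrestricted (n : ℕ) (hn : 1 ≤ n) (a : ℝ)
    (X : TypeBTableau n → ℝ) :
    (1 / (Fintype.card (TypeBTableau (n + 1)) : ℝ)) *
        ∑ T : TypeBTableau (n + 1), X T.trunc * a ^ T.numUnrestricted =
      (a / ((n : ℝ) + 1)) *
        ((1 / (Fintype.card (TypeBTableau n) : ℝ)) *
          ∑ T' : TypeBTableau n, X T' * (a + 1) ^ T'.numUnrestricted) :=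
  average_trunc_pow_unrestricted_general n a X
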